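/- arXiv:0801.2234 — 2 statements merged into one kernel-verified Lean document; each statement's English description precedes it below -/
import Mathlib

section
/- Let F be an entire function on ℂ, let C > 0, and suppose |F(w)| ≤ 3C·e^{|w|²} for all w, and |F(w)| ≤ C on the two rays {r e^{iθ₀} : r ≥ 0} and {r e^{iθ₁} : r ≥ 0} where 0 ≤ θ₀ < θ₁ and θ₁ - θ₀ < π/2. Then |F(w)| ≤ C for all w = r e^{iθ} with θ₀ ≤ θ ≤ θ₁. -/
/-!
Under `w = exp z` the sector `θ₀ ≤ arg w ≤ θ₁` is the image of the horizontal strip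
`θ₀ ≤ im z ≤ θ₁`, of width less than `π / 2`, and a growth `exp (‖w‖ ^ ρ)` becomes
`exp (exp (ρ * re z))`. Phragmén–Lindelöf in a strip of width `b - a` allows double-exponential
growth `exp (exp (c * |re z|))` for every `c < π / (b - a)`, and here `ρ = 2 < π / (θ₁ - θ₀)`.
-/

open Real Complex

theorem Complex.exp_eq_exp_re_mul_exp_im_mul_I (z : ℂ) :
    exp z = (Real.exp z.re : ℂ) * exp (z.im * I) := by
  rw [ofReal_exp, ← exp_add, re_add_im]

theorem Complex.norm_exp_rpow (z : ℂ) (ρ : ℝ) : ‖exp z‖ ^ ρ = Real.exp (ρ * z.re) := by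
  rw [norm_exp, ← Real.exp_mul, mul_comm]

theorem isBigO_comp_exp_of_norm_le_mul_exp_rpow {F : ℂ → ℂ} {A ρ : ℝ} (hρ : 0 ≤ ρ)
    (hgrowth : ∀ w, ‖F w‖ ≤ A * Real.exp (‖w‖ ^ ρ)) (l : Filter ℂ) :
    (fun z ↦ F (exp z)) =O[l] fun z ↦ Real.exp (1 * Real.exp (ρ * |z.re|)) := by
  refine Asymptotics.IsBigO.of_bound A (Filter.Eventually.of_forall fun z ↦ ?_)
  have hre : ρ * z.re ≤ ρ * |z.re| := mul_le_mul_of_nonneg_left (le_abs_self _) hρ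
  calc ‖F (exp z)‖ ≤ A * Real.exp (Real.exp (ρ * z.re)) := by
        simpa only [norm_exp_rpow] using hgrowth (exp z)
    _ ≤ A * ‖Real.exp (1 * Real.exp (ρ * |z.re|))‖ := by
        rw [Real.norm_eq_abs, Real.abs_exp, one_mul]
        have hA : 0 ≤ A :=
          nonneg_of_mul_nonneg_left ((norm_nonneg _).trans (hgrowth 0)) (Real.exp_pos _)
        gcongr

theorem norm_comp_exp_le_of_horizontal_strip {F : ℂ → ℂ} (hF : Differentiable ℂ F)
    {A C ρ θ₀ θ₁ : ℝ} (hρ : 0 ≤ ρ) (hθ : θ₀ < θ₁) (hρθ : ρ * (θ₁ - θ₀) < π)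
    (hgrowth : ∀ w, ‖F w‖ ≤ A * Real.exp (‖w‖ ^ ρ))
    (hray₀ : ∀ r : ℝ, 0 ≤ r → ‖F (r * exp (θ₀ * I))‖ ≤ C)
    (hray₁ : ∀ r : ℝ, 0 ≤ r → ‖F (r * exp (θ₁ * I))‖ ≤ C)
    {z : ℂ} (hz₀ : θ₀ ≤ z.im) (hz₁ : z.im ≤ θ₁) : ‖F (exp z)‖ ≤ C := by
  have hρ_lt : ρ < π / (θ₁ - θ₀) := (lt_div_iff₀ (sub_pos.2 hθ)).2 hρθ
  refine PhragmenLindelof.horizontal_strip (f := fun z ↦ F (exp z))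
    (hF.comp differentiable_exp).diffContOnCl
    ⟨ρ, hρ_lt, 1, isBigO_comp_exp_of_norm_le_mul_exp_rpow hρ hgrowth _⟩
    (fun w hw ↦ ?_) (fun w hw ↦ ?_) hz₀ hz₁
  · simpa only [exp_eq_exp_re_mul_exp_im_mul_I w, hw] using hray₀ _ (Real.exp_nonneg _)
  · simpa only [exp_eq_exp_re_mul_exp_im_mul_I w, hw] using hray₁ _ (Real.exp_nonneg _)

theorem norm_le_of_sector_of_norm_le_mul_exp_rpow {F : ℂ → ℂ} (hF : Differentiable ℂ F)
    {A C ρ θ₀ θ₁ : ℝ} (hρ : 0 ≤ ρ) (hθ : θ₀ < θ₁) (hρθ : ρ * (θ₁ - θ₀) < π)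
    (hgrowth : ∀ w, ‖F w‖ ≤ A * Real.exp (‖w‖ ^ ρ))
    (hray₀ : ∀ r : ℝ, 0 ≤ r → ‖F (r * exp (θ₀ * I))‖ ≤ C)
    (hray₁ : ∀ r : ℝ, 0 ≤ r → ‖F (r * exp (θ₁ * I))‖ ≤ C)
    {r θ : ℝ} (hr : 0 ≤ r) (hθ₀ : θ₀ ≤ θ) (hθ₁ : θ ≤ θ₁) : ‖F (r * exp (θ * I))‖ ≤ C := by
  rcases hr.eq_or_lt with rfl | hr
  · simpa using hray₀ 0 le_rfl
  have hpolar : (r : ℂ) * exp (θ * I) = exp (Real.log r + θ * I) := by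
    rw [Complex.exp_add, ← ofReal_exp, Real.exp_log hr]
  rw [hpolar]
  exact norm_comp_exp_le_of_horizontal_strip hF hρ hθ hρθ hgrowth hray₀ hray₁
    (by simpa using hθ₀) (by simpa using hθ₁)

theorem phragmen_lindelof_sector_general (F : ℂ → ℂ) (hF : Differentiable ℂ F) (C : ℝ)
    (θ₀ θ₁ : ℝ) (h01 : θ₀ < θ₁) (hlt : θ₁ - θ₀ < π / 2)
    (hgrowth : ∀ w : ℂ, ‖F w‖ ≤ 3 * C * Real.exp (‖w‖ ^ 2))
    (hray0 : ∀ r : ℝ, 0 ≤ r → ‖F (r * Complex.exp (θ₀ * Complex.I))‖ ≤ C)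
    (hray1 : ∀ r : ℝ, 0 ≤ r → ‖F (r * Complex.exp (θ₁ * Complex.I))‖ ≤ C) :
    ∀ r θ : ℝ, 0 ≤ r → θ₀ ≤ θ → θ ≤ θ₁ → ‖F (r * Complex.exp (θ * Complex.I))‖ ≤ C := by
  intro r θ hr hθ₀ hθ₁
  have hgrowth' : ∀ w, ‖F w‖ ≤ 3 * C * Real.exp (‖w‖ ^ (2 : ℝ)) := by
    simpa only [Real.rpow_two] using hgrowth
  exact norm_le_of_sector_of_norm_le_mul_exp_rpow hF zero_le_two h01 (by linarith) hgrowth'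
    hray0 hray1 hr hθ₀ hθ₁

theorem phragmen_lindelof_sector (F : ℂ → ℂ) (hF : Differentiable ℂ F) (C : ℝ) (hC : 0 < C)
    (θ₀ θ₁ : ℝ) (h0 : 0 ≤ θ₀) (h01 : θ₀ < θ₁) (hlt : θ₁ - θ₀ < π / 2)
    (hgrowth : ∀ w : ℂ, ‖F w‖ ≤ 3 * C * Real.exp (‖w‖ ^ 2))
    (hray0 : ∀ r : ℝ, 0 ≤ r → ‖F (r * Complex.exp (θ₀ * Complex.I))‖ ≤ C)
    (hray1 : ∀ r : ℝ, 0 ≤ r → ‖F (r * Complex.exp (θ₁ * Complex.I))‖ ≤ C) :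
    ∀ r θ : ℝ, 0 ≤ r → θ₀ ≤ θ → θ ≤ θ₁ → ‖F (r * Complex.exp (θ * Complex.I))‖ ≤ C :=
  phragmen_lindelof_sector_general F hF C θ₀ θ₁ h01 hlt hgrowth hray0 hray1
end

section
/- For w ∈ (0,1) and x ∈ ℝ, Mehler's formula gives Σ_{k≥0} (φ_k(x))² w^k = √2 · (1-w²)^{-1/2} · exp(-((1-w)/(1+w)) x²), where φ_k are the normalized Hermite functions. -/
open Real

/-- Physicists' Hermite polynomials, as functions. -/
noncomputable def physHermiteFun : ℕ → ℝ → ℝ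
  | 0, _ => 1
  | 1, x => 2 * x
  | (n + 2), x => 2 * x * physHermiteFun (n + 1) x - 2 * (n + 1) * physHermiteFun n x

/-- Hermite functions, normalized with respect to the measure dx/√(2π). -/
noncomputable def hermiteFun (n : ℕ) (x : ℝ) : ℝ :=
  (2 * π) ^ ((1 : ℝ) / 4) * (Real.sqrt (2 ^ n * Nat.factorial n * Real.sqrt π))⁻¹
    * physHermiteFun n x * Real.exp (-x ^ 2 / 2)

/-!
The Hermite polynomials have the integral representation
`H_k(x) = 2^k / √π * ∫ (x + it)^k e^{-t²} dt`: differentiating `(x + it)^k e^{-t²}` and integrating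
over `ℝ` shows that the right-hand side satisfies the three-term recurrence of `H_k`.
Hence `φ_k(x)² w^k` is `√2 e^{-x²} / π` times the double integral of
`(2w(x + is)(x + it))^k / k! * e^{-s² - t²}`. For `|w| < 1` the series of these integrands is
dominated by a Gaussian, so it may be summed under the integral sign, which leaves the Gaussian
integral of `exp (2w(x + is)(x + it) - s² - t²)`; integrating out `t` and then `s` evaluates it.
-/

open MeasureTheory Filter
open scoped Nat Complex

noncomputable def hermiteIntegrand (x : ℝ) (k : ℕ) (t : ℝ) : ℂ :=
  (x + t * Complex.I) ^ k * cexp (-(t : ℂ) ^ 2)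

noncomputable def hermiteIntegral (k : ℕ) (x : ℝ) : ℂ :=
  ∫ t, hermiteIntegrand x k t

theorem integrable_add_abs_pow_mul_exp_neg_sq (c : ℝ) (k : ℕ) :
    Integrable fun t : ℝ => (c + |t|) ^ k * rexp (-t ^ 2) := by
  have h_abs_pow (j : ℕ) : Integrable fun t : ℝ => |t| ^ j * rexp (-t ^ 2) := by
    have h := integrable_rpow_mul_exp_neg_mul_sq one_pos
      (by linarith [(Nat.cast_nonneg j : (0 : ℝ) ≤ j)] : (-1 : ℝ) < j)
    simp_rw [Real.rpow_natCast] at h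
    refine h.abs.congr (Eventually.of_forall fun t => ?_)
    simp [abs_mul, abs_pow]
  have h_expand : (fun t : ℝ => (c + |t|) ^ k * rexp (-t ^ 2)) = fun t =>
      ∑ m ∈ Finset.range (k + 1), (c ^ m * k.choose m) * (|t| ^ (k - m) * rexp (-t ^ 2)) := by
    funext t
    rw [add_pow, Finset.sum_mul]
    exact Finset.sum_congr rfl fun m _ => by ring
  rw [h_expand]
  exact integrable_finsetSum _ fun m _ => (h_abs_pow (k - m)).const_mul _

theorem norm_hermiteIntegrand_le (x : ℝ) (k : ℕ) (t : ℝ) :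
    ‖hermiteIntegrand x k t‖ ≤ (|x| + |t|) ^ k * rexp (-t ^ 2) := by
  have h_base : ‖(x : ℂ) + t * Complex.I‖ ≤ |x| + |t| :=
    (norm_add_le _ _).trans_eq (by simp)
  rw [hermiteIntegrand, norm_mul, norm_pow, ← Complex.ofReal_pow, ← Complex.ofReal_neg,
    Complex.norm_exp_ofReal]
  gcongr

theorem continuous_hermiteIntegrand (x : ℝ) (k : ℕ) : Continuous (hermiteIntegrand x k) := by
  unfold hermiteIntegrand
  fun_prop

theorem integrable_hermiteIntegrand (x : ℝ) (k : ℕ) : Integrable (hermiteIntegrand x k) :=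
  (integrable_add_abs_pow_mul_exp_neg_sq |x| k).mono'
    (continuous_hermiteIntegrand x k).aestronglyMeasurable
    (Eventually.of_forall (norm_hermiteIntegrand_le x k))

theorem hasDerivAt_hermiteIntegrand (x : ℝ) (k : ℕ) (t : ℝ) :
    HasDerivAt (hermiteIntegrand x k)
      (Complex.I * (k * hermiteIntegrand x (k - 1) t + 2 * hermiteIntegrand x (k + 1) t
        - 2 * x * hermiteIntegrand x k t)) t := by
  have h_lin : HasDerivAt (fun t : ℝ => (x : ℂ) + t * Complex.I) Complex.I t := by
    simpa using ((Complex.ofRealCLM.hasDerivAt (x := t)).mul_const Complex.I).const_add (x : ℂ)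
  have h_pow := (hasDerivAt_pow k ((x : ℂ) + t * Complex.I)).comp t h_lin
  have h_gauss :
      HasDerivAt (fun t : ℝ => cexp (-(t : ℂ) ^ 2)) (cexp (-(t : ℂ) ^ 2) * (-2 * t)) t := by
    have h_sq : HasDerivAt (fun t : ℝ => -(t : ℂ) ^ 2) (-(2 * t)) t := by
      simpa using (hasDerivAt_pow 2 t).neg.ofReal_comp
    exact h_sq.cexp.congr_deriv (by ring)
  refine (h_pow.mul h_gauss).congr_deriv ?_
  simp only [hermiteIntegrand, Function.comp]
  -- `-2t (x + it)^k = 2i ((x + it)^(k+1) - x (x + it)^k)`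
  linear_combination (-2 * t * ((x : ℂ) + t * Complex.I) ^ k * cexp (-(t : ℂ) ^ 2)) * Complex.I_sq

theorem ofReal_cpow_one_half {r : ℝ} (hr : 0 ≤ r) : (r : ℂ) ^ (1 / 2 : ℂ) = √r := by
  rw [Real.sqrt_eq_rpow, Complex.ofReal_cpow hr]
  norm_num

theorem hermiteIntegral_succ (x : ℝ) (k : ℕ) :
    2 * hermiteIntegral (k + 1) x
      = 2 * x * hermiteIntegral k x - k * hermiteIntegral (k - 1) x := by
  have h_int (c : ℂ) (j : ℕ) : Integrable fun t => c * hermiteIntegrand x j t :=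
    (integrable_hermiteIntegrand x j).const_mul c
  have h_add : Integrable fun t =>
      k * hermiteIntegrand x (k - 1) t + 2 * hermiteIntegrand x (k + 1) t :=
    (h_int _ _).add (h_int _ _)
  have h_zero := integral_eq_zero_of_hasDerivAt_of_integrable (hasDerivAt_hermiteIntegrand x k)
    ((h_add.sub (h_int _ _)).const_mul _) (integrable_hermiteIntegrand x k)
  rw [integral_const_mul, integral_sub h_add (h_int _ _),
    integral_add (h_int _ _) (h_int _ _), integral_const_mul, integral_const_mul,
    integral_const_mul] at h_zero
  simp only [hermiteIntegral]
  linear_combination (mul_eq_zero.mp h_zero).resolve_left Complex.I_ne_zero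

theorem hermiteIntegral_zero (x : ℝ) : hermiteIntegral 0 x = √π := calc
  hermiteIntegral 0 x = ∫ t : ℝ, cexp (-1 * (t : ℂ) ^ 2) := by
    simp [hermiteIntegral, hermiteIntegrand]
  _ = (π / 1) ^ (1 / 2 : ℂ) := integral_gaussian_complex (by simp)
  _ = √π := by rw [div_one, ofReal_cpow_one_half pi_pos.le]

theorem hermiteIntegral_eq (k : ℕ) (x : ℝ) :
    hermiteIntegral k x = (√π / 2 ^ k * physHermiteFun k x : ℝ) := by
  induction k using Nat.strong_induction_on with
  | _ k ih =>
    match k with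
    | 0 => simp [hermiteIntegral_zero, physHermiteFun]
    | 1 =>
      have h := hermiteIntegral_succ x 0
      rw [hermiteIntegral_zero] at h
      simp only [physHermiteFun]
      push_cast
      linear_combination h / 2
    | n + 2 =>
      have h := hermiteIntegral_succ x (n + 1)
      rw [Nat.add_sub_cancel, ih (n + 1) (by omega), ih n (by omega)] at h
      simp only [physHermiteFun]
      push_cast at h ⊢
      linear_combination h / 2

theorem hasSum_integral_pow_div_factorial_mul {α : Type*} [MeasurableSpace α] {μ : Measure α}
    {a b : α → ℂ} (ha : AEStronglyMeasurable a μ) (hb : AEStronglyMeasurable b μ)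
    (h_int : Integrable (fun p => rexp ‖a p‖ * ‖b p‖) μ) :
    HasSum (fun k : ℕ => ∫ p, a p ^ k / k ! * b p ∂μ) (∫ p, cexp (a p) * b p ∂μ) := by
  have h_exp_norm (p : α) : HasSum (fun k : ℕ => ‖a p‖ ^ k / k ! * ‖b p‖) (rexp ‖a p‖ * ‖b p‖) := by
    rw [Real.exp_eq_exp_ℝ]
    exact (NormedSpace.expSeries_div_hasSum_exp ‖a p‖).mul_right _
  refine hasSum_integral_of_dominated_convergence (fun k p => ‖a p‖ ^ k / k ! * ‖b p‖)
    (fun k => ((ha.pow k).mul_const _).mul hb) (fun k => Eventually.of_forall fun p => ?_)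
    (Eventually.of_forall fun p => (h_exp_norm p).summable)
    (h_int.congr (Eventually.of_forall fun p => (h_exp_norm p).tsum_eq.symm))
    (Eventually.of_forall fun p => ?_)
  · simp [norm_pow]
  · rw [Complex.exp_eq_exp_ℂ]
    exact (NormedSpace.expSeries_div_hasSum_exp (a p)).mul_right _

noncomputable def mehlerExponent (w x : ℝ) (p : ℝ × ℝ) : ℂ :=
  2 * w * (x + p.1 * Complex.I) * (x + p.2 * Complex.I)

theorem integral_mehlerExponent_pow_mul (w x : ℝ) (k : ℕ) :
    ∫ p : ℝ × ℝ, mehlerExponent w x p ^ k / k ! * (cexp (-(p.1 : ℂ) ^ 2) * cexp (-(p.2 : ℂ) ^ 2))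
      = (2 * w) ^ k / k ! * hermiteIntegral k x ^ 2 := by
  have h_split (p : ℝ × ℝ) :
      mehlerExponent w x p ^ k / k ! * (cexp (-(p.1 : ℂ) ^ 2) * cexp (-(p.2 : ℂ) ^ 2))
        = (2 * w) ^ k / k ! * (hermiteIntegrand x k p.1 * hermiteIntegrand x k p.2) := by
    simp only [mehlerExponent, hermiteIntegrand, mul_pow]
    ring
  simp_rw [h_split]
  rw [integral_const_mul, Measure.volume_eq_prod, integral_prod_mul, hermiteIntegral, sq]

theorem norm_mehlerExponent_le (w x : ℝ) (p : ℝ × ℝ) :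
    ‖mehlerExponent w x p‖ ≤ |w| * (2 * x ^ 2 + p.1 ^ 2 + p.2 ^ 2) := by
  have h_sq (s : ℝ) : ‖(x : ℂ) + s * Complex.I‖ ^ 2 = x ^ 2 + s ^ 2 := by
    rw [Complex.sq_norm, Complex.normSq_add_mul_I]
  have h_norm : ‖mehlerExponent w x p‖
      = 2 * |w| * ‖(x : ℂ) + p.1 * Complex.I‖ * ‖(x : ℂ) + p.2 * Complex.I‖ := by
    simp [mehlerExponent]
  rw [h_norm]
  nlinarith [h_sq p.1, h_sq p.2, abs_nonneg w,
    sq_nonneg (‖(x : ℂ) + p.1 * Complex.I‖ - ‖(x : ℂ) + p.2 * Complex.I‖)]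

theorem integrable_exp_norm_mehlerExponent_mul {w : ℝ} (hw : |w| < 1) (x : ℝ) :
    Integrable fun p : ℝ × ℝ =>
      rexp ‖mehlerExponent w x p‖ * ‖cexp (-(p.1 : ℂ) ^ 2) * cexp (-(p.2 : ℂ) ^ 2)‖ := by
  have h_gauss : Integrable fun p : ℝ × ℝ =>
      rexp (2 * |w| * x ^ 2) * (rexp (-(1 - |w|) * p.1 ^ 2) * rexp (-(1 - |w|) * p.2 ^ 2)) := by
    have h := integrable_exp_neg_mul_sq (sub_pos.mpr hw)
    rw [Measure.volume_eq_prod]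
    exact (h.mul_prod h).const_mul _
  refine h_gauss.mono' (by unfold mehlerExponent; fun_prop) (Eventually.of_forall fun p => ?_)
  rw [Real.norm_of_nonneg (by positivity), norm_mul, ← Complex.ofReal_pow, ← Complex.ofReal_pow,
    ← Complex.ofReal_neg, ← Complex.ofReal_neg, Complex.norm_exp_ofReal, Complex.norm_exp_ofReal,
    ← Real.exp_add, ← Real.exp_add, ← Real.exp_add, ← Real.exp_add]
  refine Real.exp_le_exp.mpr ?_
  linarith [norm_mehlerExponent_le w x p]

theorem integral_exp_mehlerExponent_mul_slice (w x s : ℝ) :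
    ∫ t : ℝ, cexp (mehlerExponent w x (s, t)) * (cexp (-(s : ℂ) ^ 2) * cexp (-(t : ℂ) ^ 2))
      = √π * cexp ((w ^ 2 - 1 : ℝ) * s ^ 2 + (2 * w * x * (1 - w) : ℝ) * Complex.I * s
          + ((2 * w - w ^ 2) * x ^ 2 : ℝ)) := by
  have h_quadratic (t : ℝ) :
      cexp (mehlerExponent w x (s, t)) * (cexp (-(s : ℂ) ^ 2) * cexp (-(t : ℂ) ^ 2))
        = cexp (-1 * t ^ 2 + 2 * w * (x + s * Complex.I) * Complex.I * t
            + (2 * w * x * (x + s * Complex.I) - s ^ 2)) := by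
    rw [← Complex.exp_add, ← Complex.exp_add, mehlerExponent]
    congr 1
    ring
  simp_rw [h_quadratic]
  rw [integral_cexp_quadratic (by simp), neg_neg, div_one, ofReal_cpow_one_half pi_pos.le]
  congr 2
  push_cast
  linear_combination ((w : ℂ) ^ 2 * x ^ 2 + 2 * (w : ℂ) ^ 2 * x * s * Complex.I
    + (w : ℂ) ^ 2 * s ^ 2 * (Complex.I ^ 2 - 1)) * Complex.I_sq

theorem integral_exp_mehlerExponent_mul {w : ℝ} (hw : |w| < 1) (x : ℝ) :
    ∫ p : ℝ × ℝ, cexp (mehlerExponent w x p) * (cexp (-(p.1 : ℂ) ^ 2) * cexp (-(p.2 : ℂ) ^ 2))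
      = (π / √(1 - w ^ 2) * rexp (2 * w * x ^ 2 / (1 + w)) : ℝ) := by
  have h_one_sub_sq : 0 < 1 - w ^ 2 := by nlinarith [sq_abs w, abs_nonneg w]
  have h_one_add : 0 < 1 + w := by linarith [neg_abs_le w]
  have h_int : Integrable fun p : ℝ × ℝ =>
      cexp (mehlerExponent w x p) * (cexp (-(p.1 : ℂ) ^ 2) * cexp (-(p.2 : ℂ) ^ 2)) :=
    (integrable_exp_norm_mehlerExponent_mul hw x).mono' (by unfold mehlerExponent; fun_prop)
      (Eventually.of_forall fun p => by
        rw [norm_mul]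
        exact mul_le_mul_of_nonneg_right (Complex.norm_exp_le_exp_norm _) (norm_nonneg _))
  have h_sqrt : √π * √(π / -(w ^ 2 - 1)) = π / √(1 - w ^ 2) := by
    rw [neg_sub, Real.sqrt_div pi_pos.le, ← mul_div_assoc, Real.mul_self_sqrt pi_pos.le]
  have h_exponent : (2 * w - w ^ 2) * x ^ 2 - (2 * w * x * (1 - w)) ^ 2 * -1 / (4 * (w ^ 2 - 1))
      = 2 * w * x ^ 2 / (1 + w) := by
    have : w ^ 2 - 1 ≠ 0 := by linarith
    field_simp
    ring
  rw [Measure.volume_eq_prod, integral_prod _ h_int]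
  simp_rw [integral_exp_mehlerExponent_mul_slice]
  rw [integral_const_mul, integral_cexp_quadratic (by rw [Complex.ofReal_re]; linarith),
    ← Complex.ofReal_neg, ← Complex.ofReal_div,
    ofReal_cpow_one_half (div_nonneg pi_pos.le (by linarith)),
    ← mul_assoc, ← Complex.ofReal_mul, h_sqrt, mul_pow, Complex.I_sq, ← h_exponent]
  push_cast
  ring

theorem hasSum_pow_div_factorial_mul_hermiteIntegral_sq {w : ℝ} (hw : |w| < 1) (x : ℝ) :
    HasSum (fun k : ℕ => (2 * w) ^ k / k ! * hermiteIntegral k x ^ 2)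
      ((π / √(1 - w ^ 2) * rexp (2 * w * x ^ 2 / (1 + w)) : ℝ) : ℂ) := by
  have h := hasSum_integral_pow_div_factorial_mul (by unfold mehlerExponent; fun_prop)
    (by fun_prop) (integrable_exp_norm_mehlerExponent_mul hw x)
  simpa only [integral_mehlerExponent_pow_mul, integral_exp_mehlerExponent_mul hw] using h

theorem hermiteFun_sq_mul_pow (w x : ℝ) (k : ℕ) :
    hermiteFun k x ^ 2 * w ^ k
      = √2 * rexp (-x ^ 2) / π * ((2 * w) ^ k / k ! * (√π / 2 ^ k * physHermiteFun k x) ^ 2) := by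
  have h_quarter : ((2 * π) ^ ((1 : ℝ) / 4)) ^ 2 = √2 * √π := by
    rw [← Real.rpow_natCast, ← Real.rpow_mul (by positivity), ← Real.sqrt_mul zero_le_two,
      Real.sqrt_eq_rpow]
    norm_num
  have h_gauss : rexp (-x ^ 2 / 2) ^ 2 = rexp (-x ^ 2) := by
    rw [← Real.exp_nat_mul]
    congr 1
    ring
  have h_pi : √π ^ 2 = π := Real.sq_sqrt pi_pos.le
  rw [hermiteFun, mul_pow, mul_pow, mul_pow, h_quarter, inv_pow,
    Real.sq_sqrt (by positivity), h_gauss, mul_pow 2 w k]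
  field_simp
  rw [h_pi]
  ring

theorem mehler_diagonal (w : ℝ) (hw0 : 0 < w) (hw1 : w < 1) (x : ℝ) :
    ∑' k : ℕ, (hermiteFun k x) ^ 2 * w ^ k
      = Real.sqrt 2 * (Real.sqrt (1 - w ^ 2))⁻¹
        * Real.exp (-((1 - w) / (1 + w)) * x ^ 2) := by
  have hw : |w| < 1 := abs_lt.mpr ⟨by linarith, hw1⟩
  have h_one_add : 1 + w ≠ 0 := by linarith
  have h_series : HasSum (fun k : ℕ => (2 * w) ^ k / k ! * (√π / 2 ^ k * physHermiteFun k x) ^ 2)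
      (π / √(1 - w ^ 2) * rexp (2 * w * x ^ 2 / (1 + w))) := by
    have h := hasSum_pow_div_factorial_mul_hermiteIntegral_sq hw x
    simp_rw [hermiteIntegral_eq] at h
    rw [← Complex.hasSum_ofReal]
    push_cast at h ⊢
    exact h
  have h_exp : rexp (-x ^ 2) * rexp (2 * w * x ^ 2 / (1 + w))
      = rexp (-((1 - w) / (1 + w)) * x ^ 2) := by
    rw [← Real.exp_add]
    congr 1
    field_simp
    ring
  rw [tsum_congr (hermiteFun_sq_mul_pow w x), tsum_mul_left, h_series.tsum_eq, ← h_exp]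
  field_simp
end
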